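/- Let μ ∈ ℝ^d, let Σ be a d×d positive semidefinite matrix, let ε ∈ (0,1), and let A be a finite nonempty set of points in ℝ^d satisfying conditions (L.1)–(L.2) with respect to (μ, Σ, ε). Let A' ⊆ A with |A'| ≥ (1−ε)|A|, let P and L be symmetric d×d matrices, and let r ≥ 0. If ‖Cov_{x∼A'}[P x] − L‖_F ≤ r, then ‖P Σ P − L‖_F ≤ 2·(r + ‖L‖_op). -/

import Mathlib

open Matrix MeasureTheory ProbabilityTheory

noncomputable section

namespace ListDecCov

/-- Frobenius norm of a square real matrix. -/
def frobNorm {d : ℕ} (M : Matrix (Fin d) (Fin d) ℝ) : ℝ :=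
  Real.sqrt (∑ i, ∑ j, (M i j) ^ 2)

/-- Operator (spectral) norm of a square real matrix. -/
def opNorm {d : ℕ} (M : Matrix (Fin d) (Fin d) ℝ) : ℝ :=
  ‖Matrix.toEuclideanCLM (𝕜 := ℝ) M‖

/-- Euclidean (ℓ²) norm of a vector. -/
def vecNorm {d : ℕ} (v : Fin d → ℝ) : ℝ :=
  Real.sqrt (∑ i, (v i) ^ 2)

/-- The four Penrose equations characterizing the Moore–Penrose pseudoinverse. -/
def IsMoorePenrose {d : ℕ} (H Hd : Matrix (Fin d) (Fin d) ℝ) : Prop :=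
  H * Hd * H = H ∧ Hd * H * Hd = Hd ∧ (H * Hd)ᵀ = H * Hd ∧ (Hd * H)ᵀ = Hd * H

/-- Average of `f` over a finite set. -/
def fAvg {X V : Type*} [AddCommMonoid V] [Module ℝ V] (A : Finset X) (f : X → V) : V :=
  (A.card : ℝ)⁻¹ • ∑ x ∈ A, f x

/-- Average of `f` over a multiset. -/
def msAvg {X V : Type*} [AddCommMonoid V] [Module ℝ V] (T : Multiset X) (f : X → V) : V :=
  (T.card : ℝ)⁻¹ • (T.map f).sum

/-- Empirical covariance matrix of `f x`, `x` ranging over a finite set. -/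
def fCov {X : Type*} {d : ℕ} (A : Finset X) (f : X → (Fin d → ℝ)) :
    Matrix (Fin d) (Fin d) ℝ :=
  fAvg A (fun x => Matrix.vecMulVec (f x) (f x)) - Matrix.vecMulVec (fAvg A f) (fAvg A f)

/-- Empirical covariance matrix of `f x`, `x` ranging over a multiset. -/
def msCov {X : Type*} {d : ℕ} (T : Multiset X) (f : X → (Fin d → ℝ)) :
    Matrix (Fin d) (Fin d) ℝ :=
  msAvg T (fun x => Matrix.vecMulVec (f x) (f x)) - Matrix.vecMulVec (msAvg T f) (msAvg T f)

/-- Empirical variance of `g x`, `x` ranging over a finite set. -/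
def fVar {X : Type*} (A : Finset X) (g : X → ℝ) : ℝ :=
  fAvg A fun x => (g x - fAvg A g) ^ 2

/-- Empirical variance of `g x`, `x` ranging over a multiset. -/
def msVar {X : Type*} (T : Multiset X) (g : X → ℝ) : ℝ :=
  msAvg T fun x => (g x - msAvg T g) ^ 2

/-- The `k`-th smallest element (1-indexed) of a multiset of reals. -/
def kthSmallest (s : Multiset ℝ) (k : ℕ) : ℝ :=
  (s.sort (· ≤ ·)).getD (k - 1) 0

/-- Median (the `⌈m/2⌉`-th smallest element) of a multiset of reals of size `m`. -/
def msMedian (s : Multiset ℝ) : ℝ :=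
  kthSmallest s ((Multiset.card s + 1) / 2)

/-- The positive semidefinite square root of a psd matrix, as `Matrix.PosSemidef.sqrt` was
defined in the older Mathlib. -/
def psdSqrt {d : ℕ} {A : Matrix (Fin d) (Fin d) ℝ} (hA : A.PosSemidef) :
    Matrix (Fin d) (Fin d) ℝ :=
  hA.1.eigenvectorUnitary.1 * diagonal ((↑) ∘ (√·) ∘ hA.1.eigenvalues) *
  (star hA.1.eigenvectorUnitary : Matrix (Fin d) (Fin d) ℝ)

/-- Conditions (L.1)–(L.2) of stability, with respect to mean `μ`, covariance `Sig`
(with psd square root `sqrtSig`) and parameter `ε`. -/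
def SatisfiesL12 {d : ℕ} (μ : Fin d → ℝ) (Sig sqrtSig : Matrix (Fin d) (Fin d) ℝ) (ε : ℝ)
    (A : Finset (Fin d → ℝ)) : Prop :=
  ∀ A' ⊆ A, (1 - ε) * (A.card : ℝ) ≤ (A'.card : ℝ) →
    (∀ v : Fin d → ℝ,
        |fAvg A' (fun x => v ⬝ᵥ (x - μ))| ≤ 0.1 * Real.sqrt (v ⬝ᵥ Sig.mulVec v)) ∧
    (∀ U : Matrix (Fin d) (Fin d) ℝ, U.IsSymm →
        |Matrix.trace ((fAvg A' (fun x => Matrix.vecMulVec (x - μ) (x - μ)) - Sig) * U)|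
          ≤ 0.1 * frobNorm (sqrtSig * U * sqrtSig))

end ListDecCov

/-!
Write `G = P Σ P`, `e` for the mean of `x - μ` over `A'`, and `D` for the second moment of
`x - μ` over `A'` minus `Σ`. Covariance is translation invariant, so
`Cov(P x) = G + P D P - (P e)(P e)ᵀ`. Testing (L.2) against `U = P (P D P) P` gives
`‖P D P‖_F² = tr(D U) ≤ 0.1 ‖Σ^{1/2} U Σ^{1/2}‖_F ≤ 0.1 ‖G‖_op ‖P D P‖_F`, and testing (L.1)
against `v = P (P e)` gives `‖P e‖² ≤ 0.1 √‖G‖_op ‖P e‖`. Hence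
`‖G - L‖_F ≤ r + 0.11 ‖G‖_op ≤ r + 0.11 (‖G - L‖_F + ‖L‖_op)`, which rearranges to the claim.
-/

namespace ListDecCov

open scoped Matrix.Norms.L2Operator

section Norms

variable {d : ℕ}

lemma vecNorm_eq_norm (v : Fin d → ℝ) : vecNorm v = ‖WithLp.toLp 2 v‖ := by
  simp [vecNorm, EuclideanSpace.norm_eq]

lemma vecNorm_nonneg (v : Fin d → ℝ) : 0 ≤ vecNorm v := Real.sqrt_nonneg _

lemma vecNorm_sq (v : Fin d → ℝ) : vecNorm v ^ 2 = ∑ i, v i ^ 2 :=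
  Real.sq_sqrt (Finset.sum_nonneg fun _ _ => sq_nonneg _)

lemma dotProduct_self_eq_vecNorm_sq (v : Fin d → ℝ) : v ⬝ᵥ v = vecNorm v ^ 2 := by
  rw [vecNorm_sq]; simp [dotProduct, sq]

lemma dotProduct_le_vecNorm_mul_vecNorm (v w : Fin d → ℝ) : v ⬝ᵥ w ≤ vecNorm v * vecNorm w := by
  rw [vecNorm_eq_norm, vecNorm_eq_norm]
  simpa [EuclideanSpace.inner_toLp_toLp, dotProduct_comm] using
    real_inner_le_norm (WithLp.toLp 2 v) (WithLp.toLp 2 w)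

lemma opNorm_nonneg (M : Matrix (Fin d) (Fin d) ℝ) : 0 ≤ opNorm M := norm_nonneg _

lemma opNorm_eq_norm (M : Matrix (Fin d) (Fin d) ℝ) : opNorm M = ‖M‖ := rfl

lemma vecNorm_mulVec_le (M : Matrix (Fin d) (Fin d) ℝ) (v : Fin d → ℝ) :
    vecNorm (M *ᵥ v) ≤ opNorm M * vecNorm v := by
  simpa [vecNorm_eq_norm, opNorm_eq_norm] using Matrix.l2_opNorm_mulVec M (WithLp.toLp 2 v)

lemma opNorm_transpose (M : Matrix (Fin d) (Fin d) ℝ) : opNorm Mᵀ = opNorm M := by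
  rw [opNorm_eq_norm, opNorm_eq_norm, ← conjTranspose_eq_transpose_of_trivial,
    Matrix.l2_opNorm_conjTranspose]

lemma opNorm_transpose_mul_self (M : Matrix (Fin d) (Fin d) ℝ) :
    opNorm (Mᵀ * M) = opNorm M * opNorm M := by
  rw [opNorm_eq_norm, opNorm_eq_norm, ← conjTranspose_eq_transpose_of_trivial,
    Matrix.l2_opNorm_conjTranspose_mul_self]

lemma opNorm_sub_le (M N : Matrix (Fin d) (Fin d) ℝ) : opNorm M ≤ opNorm (M - N) + opNorm N :=
  norm_le_norm_sub_add M N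

lemma frobNorm_eq_norm (M : Matrix (Fin d) (Fin d) ℝ) :
    frobNorm M = ‖WithLp.toLp 2 (fun p : Fin d × Fin d => M p.1 p.2)‖ := by
  simp [frobNorm, EuclideanSpace.norm_eq, Fintype.sum_prod_type]

lemma frobNorm_nonneg (M : Matrix (Fin d) (Fin d) ℝ) : 0 ≤ frobNorm M := Real.sqrt_nonneg _

lemma frobNorm_sq (M : Matrix (Fin d) (Fin d) ℝ) : frobNorm M ^ 2 = ∑ i, ∑ j, M i j ^ 2 :=
  Real.sq_sqrt (Finset.sum_nonneg fun _ _ => Finset.sum_nonneg fun _ _ => sq_nonneg _)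

lemma frobNorm_sub_le (M N : Matrix (Fin d) (Fin d) ℝ) :
    frobNorm (M - N) ≤ frobNorm M + frobNorm N := by
  simp only [frobNorm_eq_norm, Matrix.sub_apply]
  exact norm_sub_le (WithLp.toLp 2 _) (WithLp.toLp 2 _)

lemma frobNorm_transpose (M : Matrix (Fin d) (Fin d) ℝ) : frobNorm Mᵀ = frobNorm M := by
  rw [frobNorm, frobNorm, Finset.sum_comm]
  rfl

lemma frobNorm_sq_eq_sum_vecNorm_sq (M : Matrix (Fin d) (Fin d) ℝ) :
    frobNorm M ^ 2 = ∑ j, vecNorm (Mᵀ j) ^ 2 := by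
  simp only [frobNorm_sq, vecNorm_sq, transpose_apply]
  exact Finset.sum_comm

lemma frobNorm_mul_le_opNorm_mul (M N : Matrix (Fin d) (Fin d) ℝ) :
    frobNorm (M * N) ≤ opNorm M * frobNorm N := by
  have hcol : ∀ j, (M * N)ᵀ j = M *ᵥ Nᵀ j := fun j => by
    ext i; simp [Matrix.mul_apply, Matrix.mulVec, dotProduct]
  refine le_of_sq_le_sq ?_ (mul_nonneg (opNorm_nonneg M) (frobNorm_nonneg N))
  rw [mul_pow, frobNorm_sq_eq_sum_vecNorm_sq, frobNorm_sq_eq_sum_vecNorm_sq, Finset.mul_sum]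
  gcongr with j
  rw [hcol, ← mul_pow]
  exact pow_le_pow_left₀ (vecNorm_nonneg _) (vecNorm_mulVec_le M _) 2

lemma frobNorm_mul_le_mul_opNorm (M N : Matrix (Fin d) (Fin d) ℝ) :
    frobNorm (M * N) ≤ frobNorm M * opNorm N := by
  rw [← frobNorm_transpose, transpose_mul, mul_comm, ← opNorm_transpose N, ← frobNorm_transpose M]
  exact frobNorm_mul_le_opNorm_mul Nᵀ Mᵀ

lemma vecNorm_mulVec_le_frobNorm_mul (M : Matrix (Fin d) (Fin d) ℝ) (v : Fin d → ℝ) :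
    vecNorm (M *ᵥ v) ≤ frobNorm M * vecNorm v := by
  refine le_of_sq_le_sq ?_ (mul_nonneg (frobNorm_nonneg M) (vecNorm_nonneg v))
  rw [mul_pow, frobNorm_sq, vecNorm_sq, vecNorm_sq, Finset.sum_mul]
  exact Finset.sum_le_sum fun i _ => Finset.sum_mul_sq_le_sq_mul_sq Finset.univ (M i) v

lemma opNorm_le_frobNorm (M : Matrix (Fin d) (Fin d) ℝ) : opNorm M ≤ frobNorm M := by
  refine ContinuousLinearMap.opNorm_le_bound _ (frobNorm_nonneg M) fun v => ?_
  have := vecNorm_mulVec_le_frobNorm_mul M v.ofLp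
  rwa [vecNorm_eq_norm, vecNorm_eq_norm] at this

lemma frobNorm_vecMulVec_self (v : Fin d → ℝ) : frobNorm (vecMulVec v v) = vecNorm v ^ 2 := by
  rw [frobNorm, vecNorm_sq, ← Real.sqrt_sq (Finset.sum_nonneg fun i _ => sq_nonneg (v i)), sq,
    Finset.sum_mul_sum]
  simp only [vecMulVec_apply, mul_pow]

lemma trace_mul_self_of_isSymm {M : Matrix (Fin d) (Fin d) ℝ} (hM : M.IsSymm) :
    trace (M * M) = frobNorm M ^ 2 := by
  rw [frobNorm_sq]
  simp only [trace, diag, Matrix.mul_apply, sq]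
  exact Finset.sum_congr rfl fun i _ => Finset.sum_congr rfl fun j _ => by rw [hM.apply i j]

end Norms

section Averages

variable {X : Type*} {d : ℕ}

lemma map_fAvg {V W : Type*} [AddCommMonoid V] [Module ℝ V] [AddCommMonoid W] [Module ℝ W]
    (T : V →ₗ[ℝ] W) (A : Finset X) (f : X → V) : T (fAvg A f) = fAvg A (fun x => T (f x)) := by
  simp only [fAvg, map_smul, map_sum]

lemma fAvg_sub {V : Type*} [AddCommGroup V] [Module ℝ V] (A : Finset X) (f g : X → V) :
    fAvg A (fun x => f x - g x) = fAvg A f - fAvg A g := by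
  simp only [fAvg, Finset.sum_sub_distrib, smul_sub]

lemma fAvg_const {V : Type*} [AddCommMonoid V] [Module ℝ V] {A : Finset X} (hA : A.Nonempty)
    (c : V) : fAvg A (fun _ => c) = c := by
  rw [fAvg, Finset.sum_const, ← Nat.cast_smul_eq_nsmul ℝ, smul_smul,
    inv_mul_cancel₀ (by exact_mod_cast hA.card_pos.ne'), one_smul]

lemma fAvg_dotProduct (A : Finset X) (f : X → Fin d → ℝ) (v : Fin d → ℝ) :
    fAvg A (fun x => v ⬝ᵥ f x) = v ⬝ᵥ fAvg A f :=
  (map_fAvg (dotProductBilin ℝ ℝ v) A f).symm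

lemma fAvg_mulVec (A : Finset X) (f : X → Fin d → ℝ) (M : Matrix (Fin d) (Fin d) ℝ) :
    fAvg A (fun x => M *ᵥ f x) = M *ᵥ fAvg A f :=
  (map_fAvg M.mulVecLin A f).symm

lemma fAvg_vecMulVec_const (A : Finset X) (f : X → Fin d → ℝ) (c : Fin d → ℝ) :
    fAvg A (fun x => vecMulVec (f x) c) = vecMulVec (fAvg A f) c :=
  (map_fAvg ((vecMulVecBilin ℝ ℝ).flip c) A f).symm

lemma fAvg_const_vecMulVec (A : Finset X) (f : X → Fin d → ℝ) (c : Fin d → ℝ) :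
    fAvg A (fun x => vecMulVec c (f x)) = vecMulVec c (fAvg A f) :=
  (map_fAvg (vecMulVecBilin ℝ ℝ c) A f).symm

lemma fAvg_mul_mul (A : Finset X) (f : X → Matrix (Fin d) (Fin d) ℝ)
    (M N : Matrix (Fin d) (Fin d) ℝ) : fAvg A (fun x => M * f x * N) = M * fAvg A f * N := by
  simp only [fAvg, Matrix.mul_smul, Matrix.smul_mul, Finset.mul_sum, Finset.sum_mul]

lemma isSymm_fAvg_vecMulVec_self (A : Finset X) (f : X → Fin d → ℝ) :
    (fAvg A (fun x => vecMulVec (f x) (f x))).IsSymm := by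
  simp [IsSymm, fAvg, transpose_sum, transpose_vecMulVec]

lemma fCov_sub_const (A : Finset X) (f : X → Fin d → ℝ) (c : Fin d → ℝ) :
    fCov A (fun x => f x - c) = fCov A f := by
  rcases A.eq_empty_or_nonempty with rfl | hA
  · simp [fCov, fAvg]
  simp only [fCov, sub_vecMulVec, vecMulVec_sub, fAvg_sub, fAvg_const hA, fAvg_vecMulVec_const,
    fAvg_const_vecMulVec]
  abel

lemma vecMulVec_mulVec_mulVec (M : Matrix (Fin d) (Fin d) ℝ) (a b : Fin d → ℝ) :
    vecMulVec (M *ᵥ a) (M *ᵥ b) = M * vecMulVec a b * Mᵀ := by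
  rw [mul_vecMulVec, vecMulVec_mul, vecMul_transpose]

lemma fCov_mulVec (A : Finset X) (f : X → Fin d → ℝ) (M : Matrix (Fin d) (Fin d) ℝ) :
    fCov A (fun x => M *ᵥ f x) = M * fCov A f * Mᵀ := by
  simp only [fCov, vecMulVec_mulVec_mulVec, fAvg_mulVec, fAvg_mul_mul, Matrix.mul_sub,
    Matrix.sub_mul]

end Averages

section PsdSqrt

variable {d : ℕ} {Sig : Matrix (Fin d) (Fin d) ℝ}

lemma psdSqrt_isSymm (hSig : Sig.PosSemidef) : (psdSqrt hSig).IsSymm := by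
  rw [IsSymm, ← conjTranspose_eq_transpose_of_trivial, psdSqrt, conjTranspose_mul,
    conjTranspose_mul, star_eq_conjTranspose, conjTranspose_conjTranspose,
    diagonal_conjTranspose, Matrix.mul_assoc]
  congr 3

lemma psdSqrt_mul_self (hSig : Sig.PosSemidef) : psdSqrt hSig * psdSqrt hSig = Sig := by
  set U := hSig.1.eigenvectorUnitary
  have hU : (star U : Matrix (Fin d) (Fin d) ℝ) * U = 1 := Unitary.star_mul_self_of_mem U.2
  conv_rhs => rw [hSig.1.spectral_theorem, Unitary.conjStarAlgAut_apply]
  rw [psdSqrt, show ∀ a b c e f g : Matrix (Fin d) (Fin d) ℝ,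
      a * b * c * (e * f * g) = a * (b * (c * e) * f) * g from
      fun a b c e f g => by simp only [Matrix.mul_assoc], hU, Matrix.mul_one,
    diagonal_mul_diagonal]
  congr 3
  funext i
  simp [Real.mul_self_sqrt (hSig.eigenvalues_nonneg i)]

end PsdSqrt

section Stability

variable {d : ℕ}

lemma le_of_sq_le_mul {a b : ℝ} (hb : 0 ≤ b) (h : a ^ 2 ≤ b * a) : a ≤ b := by
  nlinarith

lemma mulVec_dotProduct_of_isSymm {P : Matrix (Fin d) (Fin d) ℝ} (hP : P.IsSymm) (v w : Fin d → ℝ) :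
    (P *ᵥ v) ⬝ᵥ w = v ⬝ᵥ (P *ᵥ w) := by
  rw [Matrix.dotProduct_mulVec, ← vecMul_transpose, hP.eq]

lemma frobNorm_conj_le_of_abs_trace_le {D S P : Matrix (Fin d) (Fin d) ℝ} {δ : ℝ} (hδ : 0 ≤ δ)
    (hD : D.IsSymm) (hS : S.IsSymm) (hP : P.IsSymm)
    (h : ∀ U : Matrix (Fin d) (Fin d) ℝ, U.IsSymm → |trace (D * U)| ≤ δ * frobNorm (S * U * S)) :
    frobNorm (P * D * P) ≤ δ * opNorm (P * (S * S) * P) := by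
  set M := P * D * P
  have hM : M.IsSymm := by simp only [M, IsSymm, transpose_mul, hP.eq, hD.eq, Matrix.mul_assoc]
  have htrace : trace (D * (P * M * P)) = frobNorm M ^ 2 := by
    rw [← trace_mul_self_of_isSymm hM, show D * (P * M * P) = D * P * M * P by
      simp only [Matrix.mul_assoc], trace_mul_comm]
    simp only [M, Matrix.mul_assoc]
  have hSP : opNorm (S * P) * opNorm (S * P) = opNorm (P * (S * S) * P) := by
    rw [← opNorm_transpose_mul_self, transpose_mul, hS.eq, hP.eq]
    simp only [Matrix.mul_assoc]
  have hPS : opNorm (P * S) = opNorm (S * P) := by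
    rw [← opNorm_transpose, transpose_mul, hS.eq, hP.eq]
  have hconj : frobNorm (S * (P * M * P) * S) ≤ opNorm (P * (S * S) * P) * frobNorm M :=
    calc frobNorm (S * (P * M * P) * S) = frobNorm (S * P * M * (P * S)) := by
          simp only [Matrix.mul_assoc]
      _ ≤ opNorm (S * P) * frobNorm M * opNorm (P * S) :=
          (frobNorm_mul_le_mul_opNorm _ _).trans <| mul_le_mul_of_nonneg_right
            (frobNorm_mul_le_opNorm_mul _ _) (opNorm_nonneg _)
      _ = opNorm (P * (S * S) * P) * frobNorm M := by rw [hPS, ← hSP]; ring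
  refine le_of_sq_le_mul (mul_nonneg hδ (opNorm_nonneg _)) ?_
  calc frobNorm M ^ 2 ≤ |trace (D * (P * M * P))| := htrace ▸ le_abs_self _
    _ ≤ δ * frobNorm (S * (P * M * P) * S) := h (P * M * P) (by
          simp only [IsSymm, transpose_mul, hP.eq, hM.eq, Matrix.mul_assoc])
    _ ≤ δ * opNorm (P * (S * S) * P) * frobNorm M := by
          rw [mul_assoc δ]; exact mul_le_mul_of_nonneg_left hconj hδ

lemma vecNorm_mulVec_le_of_abs_dotProduct_le {Sig P : Matrix (Fin d) (Fin d) ℝ}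
    {e : Fin d → ℝ} {δ : ℝ} (hδ : 0 ≤ δ) (hP : P.IsSymm)
    (h : ∀ v : Fin d → ℝ, |v ⬝ᵥ e| ≤ δ * √(v ⬝ᵥ Sig *ᵥ v)) :
    vecNorm (P *ᵥ e) ≤ δ * √(opNorm (P * Sig * P)) := by
  set w := P *ᵥ e
  set G := P * Sig * P
  have hquad : (P *ᵥ w) ⬝ᵥ Sig *ᵥ (P *ᵥ w) ≤ opNorm G * vecNorm w ^ 2 :=
    calc (P *ᵥ w) ⬝ᵥ Sig *ᵥ (P *ᵥ w) = w ⬝ᵥ G *ᵥ w := by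
          rw [mulVec_dotProduct_of_isSymm hP, mulVec_mulVec, mulVec_mulVec]
      _ ≤ vecNorm w * (opNorm G * vecNorm w) :=
          (dotProduct_le_vecNorm_mul_vecNorm _ _).trans <|
            mul_le_mul_of_nonneg_left (vecNorm_mulVec_le _ _) (vecNorm_nonneg _)
      _ = opNorm G * vecNorm w ^ 2 := by ring
  refine le_of_sq_le_mul (mul_nonneg hδ (Real.sqrt_nonneg _)) ?_
  calc vecNorm w ^ 2 = (P *ᵥ w) ⬝ᵥ e := by
        rw [← dotProduct_self_eq_vecNorm_sq, mulVec_dotProduct_of_isSymm hP, dotProduct_comm]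
    _ ≤ δ * √((P *ᵥ w) ⬝ᵥ Sig *ᵥ (P *ᵥ w)) := (le_abs_self _).trans (h _)
    _ ≤ δ * √(opNorm G * vecNorm w ^ 2) := by gcongr
    _ = δ * √(opNorm G) * vecNorm w := by
        rw [Real.sqrt_mul (opNorm_nonneg G), Real.sqrt_sq (vecNorm_nonneg w), mul_assoc]

end Stability

theorem statement3_general (d : ℕ) (μ : Fin d → ℝ)
    (Sig : Matrix (Fin d) (Fin d) ℝ) (hSig : Sig.PosSemidef)
    (ε : ℝ)
    (A : Finset (Fin d → ℝ))
    (hstab : SatisfiesL12 μ Sig (psdSqrt hSig) ε A)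
    (A' : Finset (Fin d → ℝ)) (hsub : A' ⊆ A)
    (hcard : (1 - ε) * (A.card : ℝ) ≤ (A'.card : ℝ))
    (P L : Matrix (Fin d) (Fin d) ℝ) (hP : P.IsSymm)
    (r : ℝ)
    (hclose : frobNorm (fCov A' (fun x => P.mulVec x) - L) ≤ r) :
    frobNorm (P * Sig * P - L) ≤ 2 * (r + opNorm L) := by
  obtain ⟨hmean, hsecond⟩ := hstab A' hsub hcard
  set e := fAvg A' (fun x => x - μ)
  set D := fAvg A' (fun x => vecMulVec (x - μ) (x - μ)) - Sig
  set G := P * Sig * P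
  have hD : frobNorm (P * D * P) ≤ 0.1 * opNorm G := by
    have hDsymm : D.IsSymm := (isSymm_fAvg_vecMulVec_self A' _).sub hSig.isHermitian
    simpa only [psdSqrt_mul_self hSig] using
      frobNorm_conj_le_of_abs_trace_le (by norm_num) hDsymm (psdSqrt_isSymm hSig) hP hsecond
  have he : frobNorm (vecMulVec (P *ᵥ e) (P *ᵥ e)) ≤ 0.01 * opNorm G := by
    have hmean' : ∀ v, |v ⬝ᵥ e| ≤ 0.1 * √(v ⬝ᵥ Sig *ᵥ v) := fun v => by
      simpa only [fAvg_dotProduct] using hmean v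
    have hPe := vecNorm_mulVec_le_of_abs_dotProduct_le (by norm_num) hP hmean'
    rw [frobNorm_vecMulVec_self]
    calc vecNorm (P *ᵥ e) ^ 2 ≤ (0.1 * √(opNorm G)) ^ 2 := pow_le_pow_left₀ (vecNorm_nonneg _) hPe 2
      _ = 0.01 * opNorm G := by rw [mul_pow, Real.sq_sqrt (opNorm_nonneg G)]; norm_num
  have hcov : fCov A' (fun x => P *ᵥ x) = G + (P * D * P - vecMulVec (P *ᵥ e) (P *ᵥ e)) := by
    rw [fCov_mulVec, hP.eq, ← fCov_sub_const A' _ μ, fCov, vecMulVec_mulVec_mulVec, hP.eq]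
    simp only [G, D, Matrix.mul_sub, Matrix.sub_mul]
    abel
  have hGL : frobNorm (G - L) ≤ r + (0.1 * opNorm G + 0.01 * opNorm G) := by
    rw [show G - L = (fCov A' (fun x => P *ᵥ x) - L)
      - (P * D * P - vecMulVec (P *ᵥ e) (P *ᵥ e)) by rw [hcov]; abel]
    refine (frobNorm_sub_le _ _).trans (add_le_add hclose ?_)
    exact (frobNorm_sub_le _ _).trans (add_le_add hD he)
  linarith [opNorm_le_frobNorm (G - L), opNorm_sub_le G L, opNorm_nonneg L,
    frobNorm_nonneg (fCov A' (fun x => P *ᵥ x) - L)]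

/-- if the empirical covariance of `P x` over a large subset `A'` of a stable
set `A` is `r`-close to `L` in Frobenius norm, then `‖P Σ P − L‖_F ≤ 2(r + ‖L‖_op)`. -/
theorem statement3 (d : ℕ) (μ : Fin d → ℝ)
    (Sig : Matrix (Fin d) (Fin d) ℝ) (hSig : Sig.PosSemidef)
    (ε : ℝ) (hε : ε ∈ Set.Ioo (0 : ℝ) 1)
    (A : Finset (Fin d → ℝ)) (hA : A.Nonempty)
    (hstab : SatisfiesL12 μ Sig (psdSqrt hSig) ε A)
    (A' : Finset (Fin d → ℝ)) (hsub : A' ⊆ A)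
    (hcard : (1 - ε) * (A.card : ℝ) ≤ (A'.card : ℝ))
    (P L : Matrix (Fin d) (Fin d) ℝ) (hP : P.IsSymm) (hL : L.IsSymm)
    (r : ℝ) (hr : 0 ≤ r)
    (hclose : frobNorm (fCov A' (fun x => P.mulVec x) - L) ≤ r) :
    frobNorm (P * Sig * P - L) ≤ 2 * (r + opNorm L) :=
  statement3_general d μ Sig hSig ε A hstab A' hsub hcard P L hP r hclose

end ListDecCov
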